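/- arXiv:math/0605757 — 3 statements merged into one kernel-verified Lean document; each statement's English description precedes it below -/
import Mathlib

section
/- Let p : (0,∞) × D × D → (0,∞) be a strictly positive kernel on a measure space (D, ξ) satisfying the Chapman–Kolmogorov equation p(s+t, x, y) = ∫_D p(s, x, w) p(t, w, y) ξ(dw) for all s, t > 0 and x, y ∈ D. Suppose that for some t > 0 and constant c₁ > 0 we have p(t,x,y)/p(t,x,z) ≥ c₁ · p(t,w,y)/p(t,w,z) for all w, x, y, z ∈ D. Then for every s > t and all w, x, y, z ∈ D, we have p(s,y,x)/p(s,z,x) ≥ c₁ · p(t,y,w)/p(t,z,w) and p(s,x,y)/p(s,x,z) ≤ c₁⁻¹ · p(t,w,y)/p(t,w,z). -/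
open MeasureTheory

theorem stmt0 {D : Type*} [MeasurableSpace D] (ξ : Measure D) [SigmaFinite ξ]
    (p : ℝ → D → D → ℝ)
    (hpos : ∀ t > (0:ℝ), ∀ x y : D, 0 < p t x y)
    (hCK : ∀ s > (0:ℝ), ∀ t > (0:ℝ), ∀ x y : D,
      p (s + t) x y = ∫ w, p s x w * p t w y ∂ξ)
    (hint : ∀ s > (0:ℝ), ∀ t > (0:ℝ), ∀ x y : D,
      Integrable (fun w => p s x w * p t w y) ξ)
    (t : ℝ) (ht : 0 < t) (c₁ : ℝ) (hc₁ : 0 < c₁)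
    (hHarnack : ∀ w x y z : D,
      p t x y / p t x z ≥ c₁ * (p t w y / p t w z)) :
    ∀ s > t, ∀ w x y z : D,
      p s y x / p s z x ≥ c₁ * (p t y w / p t z w) ∧
      p s x y / p s x z ≤ c₁⁻¹ * (p t w y / p t w z) := by
  intro s hs w x y z
  have hs0 : (0:ℝ) < s := ht.trans hs
  have hr : (0:ℝ) < s - t := sub_pos.mpr hs
  have key : ∀ a b c d : D, c₁ * (p t b c * p t a d) ≤ p t a c * p t b d := by
    intro a b c d
    have h := hHarnack b a c d
    rw [ge_iff_le, mul_div_assoc',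
      div_le_div_iff₀ (hpos t ht b d) (hpos t ht a d)] at h
    nlinarith [h]
  constructor
  · rw [ge_iff_le, mul_div_assoc',
      div_le_div_iff₀ (hpos t ht z w) (hpos s hs0 z x)]
    have hts : t + (s - t) = s := by ring
    have e1 : p s y x = ∫ u, p t y u * p (s - t) u x ∂ξ := by
      have h := hCK t ht (s - t) hr y x
      rwa [hts] at h
    have e2 : p s z x = ∫ u, p t z u * p (s - t) u x ∂ξ := by
      have h := hCK t ht (s - t) hr z x
      rwa [hts] at h
    rw [e1, e2, ← integral_const_mul, ← integral_mul_const]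
    apply integral_mono ((hint t ht (s - t) hr z x).const_mul _)
      ((hint t ht (s - t) hr y x).mul_const _)
    intro u
    simp only
    nlinarith [mul_le_mul_of_nonneg_right (key y z u w) (hpos (s - t) hr u x).le]
  · rw [mul_div_assoc', div_le_div_iff₀ (hpos s hs0 x z) (hpos t ht w z)]
    have hts : s - t + t = s := by ring
    have e1 : p s x y = ∫ u, p (s - t) x u * p t u y ∂ξ := by
      have h := hCK (s - t) hr t ht x y
      rwa [hts] at h
    have e2 : p s x z = ∫ u, p (s - t) x u * p t u z ∂ξ := by
      have h := hCK (s - t) hr t ht x z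
      rwa [hts] at h
    rw [e1, e2, ← integral_mul_const, ← integral_const_mul]
    apply integral_mono ((hint (s - t) hr t ht x y).mul_const _)
      ((hint (s - t) hr t ht x z).const_mul _)
    intro u
    simp only
    have h2 : p t u y * p t w z ≤ c₁⁻¹ * (p t w y * p t u z) := by
      rw [le_inv_mul_iff₀ hc₁]
      exact key w u y z
    nlinarith [mul_le_mul_of_nonneg_left h2 (hpos (s - t) hr x u).le]
end

section
/- Let p : (0,∞) × D × D → (0,∞) be a strictly positive kernel satisfying the Chapman–Kolmogorov equation with respect to a measure ξ. Suppose that for some t > 0 and constant c₂ > 0 we have p(t,y,x)/p(t,z,x) ≥ c₂ · p(t,y,v)/p(t,z,v) for all v, x, y, z ∈ D. Then for every s > t and all v, x, y, z ∈ D, p(s,x,y)/p(s,x,z) ≥ c₂ · p(t,v,y)/p(t,v,z) and p(s,y,x)/p(s,z,x) ≤ c₂⁻¹ · p(t,y,v)/p(t,z,v). -/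
open MeasureTheory

theorem stmt1 {D : Type*} [MeasurableSpace D] (ξ : Measure D) [SigmaFinite ξ]
    (p : ℝ → D → D → ℝ)
    (hpos : ∀ t > (0:ℝ), ∀ x y : D, 0 < p t x y)
    (hCK : ∀ s > (0:ℝ), ∀ t > (0:ℝ), ∀ x y : D,
      p (s + t) x y = ∫ w, p s x w * p t w y ∂ξ)
    (hint : ∀ s > (0:ℝ), ∀ t > (0:ℝ), ∀ x y : D,
      Integrable (fun w => p s x w * p t w y) ξ)
    (t : ℝ) (ht : 0 < t) (c₂ : ℝ) (hc₂ : 0 < c₂)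
    (hHarnack : ∀ v x y z : D,
      p t y x / p t z x ≥ c₂ * (p t y v / p t z v)) :
    ∀ s > t, ∀ v x y z : D,
      p s x y / p s x z ≥ c₂ * (p t v y / p t v z) ∧
      p s y x / p s z x ≤ c₂⁻¹ * (p t y v / p t z v) := by
  intro s hs v x y z
  have hrt : 0 < s - t := sub_pos.mpr hs
  constructor
  · -- first inequality
    have h1 : p s x y = ∫ w, p (s - t) x w * p t w y ∂ξ := by
      have := hCK (s - t) hrt t ht x y
      simpa [sub_add_cancel] using this
    have h2 : p s x z = ∫ w, p (s - t) x w * p t w z ∂ξ := by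
      have := hCK (s - t) hrt t ht x z
      simpa [sub_add_cancel] using this
    set R := c₂ * (p t v y / p t v z) with hR
    have hRpos : 0 < R := by
      have := hpos t ht v y
      have := hpos t ht v z
      positivity
    have hle : p s x y ≥ R * p s x z := by
      rw [h1, h2, ← integral_const_mul]
      refine integral_mono ((hint (s - t) hrt t ht x z).const_mul R)
        (hint (s - t) hrt t ht x y) ?_
      intro w
      simp only
      -- pointwise: R * (p (s-t) x w * p t w z) ≤ p (s-t) x w * p t w y
      have hH := hHarnack z y w v
      -- hH : p t w y / p t v y ≥ c₂ * (p t w z / p t v z)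
      have hvy := hpos t ht v y
      have hvz := hpos t ht v z
      have hwz := hpos t ht w z
      have hwy := hpos t ht w y
      have hP := hpos (s - t) hrt x w
      have key : c₂ * (p t w z / p t v z) * p t v y ≤ p t w y :=
        (le_div_iff₀ hvy).mp hH
      have : R * (p (s - t) x w * p t w z)
          = p (s - t) x w * (c₂ * (p t w z / p t v z) * p t v y) := by
        rw [hR]; ring
      rw [this]
      exact mul_le_mul_of_nonneg_left key hP.le
    rw [ge_iff_le, le_div_iff₀ (hpos s (ht.trans hs) x z)]
    linarith
  · -- second inequality
    have h1 : p s y x = ∫ w, p t y w * p (s - t) w x ∂ξ := by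
      have := hCK t ht (s - t) hrt y x
      simpa [add_sub_cancel] using this
    have h2 : p s z x = ∫ w, p t z w * p (s - t) w x ∂ξ := by
      have := hCK t ht (s - t) hrt z x
      simpa [add_sub_cancel] using this
    set R := c₂⁻¹ * (p t y v / p t z v) with hR
    have hyv := hpos t ht y v
    have hzv := hpos t ht z v
    have hRpos : 0 < R := by positivity
    have hle : p s y x ≤ R * p s z x := by
      rw [h1, h2, ← integral_const_mul]
      refine integral_mono (hint t ht (s - t) hrt y x)
        ((hint t ht (s - t) hrt z x).const_mul R) ?_
      intro w
      simp only
      have hH := hHarnack v w z y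
      -- hH : p t z w / p t y w ≥ c₂ * (p t z v / p t y v)
      have hyw := hpos t ht y w
      have hzw := hpos t ht z w
      have hP := hpos (s - t) hrt w x
      have key : c₂ * (p t z v / p t y v) * p t y w ≤ p t z w :=
        (le_div_iff₀ hyw).mp hH
      have h3 := mul_le_mul_of_nonneg_left key
        (mul_nonneg (inv_nonneg.mpr hc₂.le)
          (div_nonneg hyv.le hzv.le))
      have h4 : c₂⁻¹ * (p t y v / p t z v) * (c₂ * (p t z v / p t y v) * p t y w)
          = p t y w := by
        field_simp
      rw [h4] at h3
      calc p t y w * p (s - t) w x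
          ≤ (R * p t z w) * p (s - t) w x :=
            mul_le_mul_of_nonneg_right (by rw [hR]; exact h3) hP.le
        _ = R * (p t z w * p (s - t) w x) := by ring
    rw [div_le_iff₀ (hpos s (ht.trans hs) z x)]
    linarith
end

section
/- Let p be a strictly positive, bounded, measurable kernel on a finite measure space (D, ξ) satisfying the Chapman–Kolmogorov property. Fix t > 0, x₀ ∈ D, and suppose there is c_t > 0 such that for all w, x, z ∈ D: p(t,z,x)/∫_D p(t,y,x) ξ(dy) ≤ c_t · p(t,z,w)/∫_D p(t,y,w) ξ(dy). Then for every nonnegative measurable function f with 0 < ∫_D (∫_D p(t,z,x) f(x) ξ(dx)) ξ(dz) < ∞, and every z ∈ D, the function P_t f(z) := ∫_D p(t,z,x) f(x) ξ(dx) satisfies c_t⁻¹ · p(t,z,x₀)/∫_D p(t,y,x₀) ξ(dy) ≤ P_t f(z)/∫_D P_t f(y) ξ(dy) ≤ c_t · p(t,z,x₀)/∫_D p(t,y,x₀) ξ(dy). -/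
open MeasureTheory

theorem stmt2 {D : Type*} [MeasurableSpace D] (ξ : Measure D) [IsFiniteMeasure ξ]
    (p : ℝ → D → D → ℝ)
    (hpos : ∀ t > (0:ℝ), ∀ x y : D, 0 < p t x y)
    (hbdd : ∀ t > (0:ℝ), ∃ C : ℝ, ∀ x y : D, p t x y ≤ C)
    (hmeas : ∀ t > (0:ℝ), Measurable (Function.uncurry (p t)))
    (hCK : ∀ s > (0:ℝ), ∀ t > (0:ℝ), ∀ x y : D,
      p (s + t) x y = ∫ w, p s x w * p t w y ∂ξ)
    (t : ℝ) (ht : 0 < t) (x₀ : D) (ct : ℝ) (hct : 0 < ct)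
    (hHarnack : ∀ w x z : D,
      p t z x / ∫ y, p t y x ∂ξ ≤ ct * (p t z w / ∫ y, p t y w ∂ξ))
    (f : D → ℝ) (hf : ∀ x, 0 ≤ f x) (hfm : Measurable f)
    (hint : ∀ z : D, Integrable (fun x => p t z x * f x) ξ)
    (hintP : Integrable (fun z => ∫ x, p t z x * f x ∂ξ) ξ)
    (hposP : 0 < ∫ z, (∫ x, p t z x * f x ∂ξ) ∂ξ) :
    ∀ z : D,
      ct⁻¹ * (p t z x₀ / ∫ y, p t y x₀ ∂ξ) ≤
        (∫ x, p t z x * f x ∂ξ) / (∫ y, (∫ x, p t y x * f x ∂ξ) ∂ξ) ∧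
      (∫ x, p t z x * f x ∂ξ) / (∫ y, (∫ x, p t y x * f x ∂ξ) ∂ξ) ≤
        ct * (p t z x₀ / ∫ y, p t y x₀ ∂ξ) := by
  have hξ : ξ ≠ 0 := by
    intro h
    rw [h] at hposP
    simp at hposP
  obtain ⟨C, hC⟩ := hbdd t ht
  have hmeas' := hmeas t ht
  have hIint : ∀ x, Integrable (fun y => p t y x) ξ := by
    intro x
    refine (integrable_const C).mono' ?_ ?_
    · exact (hmeas'.comp (measurable_id.prodMk measurable_const)).aestronglyMeasurable
    · filter_upwards with y
      rw [Real.norm_eq_abs, abs_of_pos (hpos t ht y x)]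
      exact hC y x
  have hIpos : ∀ x, 0 < ∫ y, p t y x ∂ξ := by
    intro x
    rw [integral_pos_iff_support_of_nonneg (fun y => (hpos t ht y x).le) (hIint x)]
    have hs : Function.support (fun y => p t y x) = Set.univ :=
      Set.eq_univ_of_forall fun y => (hpos t ht y x).ne'
    rw [hs]
    exact Measure.measure_univ_pos.mpr hξ
  -- product integrability
  have hgmeas : Measurable (fun q : D × D => p t q.1 q.2 * f q.2) :=
    hmeas'.mul (hfm.comp measurable_snd)
  have hgint : Integrable (fun q : D × D => p t q.1 q.2 * f q.2) (ξ.prod ξ) := by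
    rw [integrable_prod_iff hgmeas.aestronglyMeasurable]
    constructor
    · exact Filter.Eventually.of_forall fun z => hint z
    · refine hintP.congr (Filter.Eventually.of_forall fun z => ?_)
      refine integral_congr_ae (Filter.Eventually.of_forall fun x => ?_)
      exact (Real.norm_of_nonneg (mul_nonneg (hpos t ht z x).le (hf x))).symm
  have hIfint : Integrable (fun x => (∫ y, p t y x ∂ξ) * f x) ξ := by
    have h := hgint.integral_prod_right
    refine h.congr (Filter.Eventually.of_forall fun x => ?_)
    exact integral_mul_const (f x) (fun y => p t y x)
  have hswap : ∫ zz, (∫ x, p t zz x * f x ∂ξ) ∂ξ = ∫ x, (∫ y, p t y x ∂ξ) * f x ∂ξ := by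
    rw [integral_integral_swap hgint]
    refine integral_congr_ae (Filter.Eventually.of_forall fun x => ?_)
    exact integral_mul_const (f x) (fun y => p t y x)
  set J := ∫ zz, (∫ x, p t zz x * f x ∂ξ) ∂ξ with hJ
  intro z
  have hub : ∫ x, p t z x * f x ∂ξ ≤ ct * (p t z x₀ / ∫ y, p t y x₀ ∂ξ) * J := by
    calc ∫ x, p t z x * f x ∂ξ
        ≤ ∫ x, ct * (p t z x₀ / ∫ y, p t y x₀ ∂ξ) * ((∫ y, p t y x ∂ξ) * f x) ∂ξ := by
          refine integral_mono (hint z) (hIfint.const_mul _) fun x => ?_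
          have hIx := (hIpos x).ne'
          have h1 := hHarnack x₀ x z
          have h2 : 0 ≤ (∫ y, p t y x ∂ξ) * f x := mul_nonneg (hIpos x).le (hf x)
          have h3 := mul_le_mul_of_nonneg_right h1 h2
          calc p t z x * f x
              = p t z x / (∫ y, p t y x ∂ξ) * ((∫ y, p t y x ∂ξ) * f x) := by
                field_simp
            _ ≤ ct * (p t z x₀ / ∫ y, p t y x₀ ∂ξ) * ((∫ y, p t y x ∂ξ) * f x) := h3
      _ = ct * (p t z x₀ / ∫ y, p t y x₀ ∂ξ) * J := by
          rw [integral_const_mul, ← hswap]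
  have hlb : ct⁻¹ * (p t z x₀ / ∫ y, p t y x₀ ∂ξ) * J ≤ ∫ x, p t z x * f x ∂ξ := by
    calc ct⁻¹ * (p t z x₀ / ∫ y, p t y x₀ ∂ξ) * J
        = ∫ x, ct⁻¹ * (p t z x₀ / ∫ y, p t y x₀ ∂ξ) * ((∫ y, p t y x ∂ξ) * f x) ∂ξ := by
          rw [integral_const_mul, ← hswap]
      _ ≤ ∫ x, p t z x * f x ∂ξ := by
          refine integral_mono (hIfint.const_mul _) (hint z) fun x => ?_
          have hIx := (hIpos x).ne'
          have h1 := hHarnack x x₀ z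
          have h1' : ct⁻¹ * (p t z x₀ / ∫ y, p t y x₀ ∂ξ) ≤ p t z x / ∫ y, p t y x ∂ξ := by
            rw [inv_mul_le_iff₀ hct] at *
            linarith [h1]
          have h2 : 0 ≤ (∫ y, p t y x ∂ξ) * f x := mul_nonneg (hIpos x).le (hf x)
          have h3 := mul_le_mul_of_nonneg_right h1' h2
          calc ct⁻¹ * (p t z x₀ / ∫ y, p t y x₀ ∂ξ) * ((∫ y, p t y x ∂ξ) * f x)
              ≤ p t z x / (∫ y, p t y x ∂ξ) * ((∫ y, p t y x ∂ξ) * f x) := h3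
            _ = p t z x * f x := by field_simp
  constructor
  · rw [le_div_iff₀ hposP]
    exact hlb
  · rw [div_le_iff₀ hposP]
    exact hub
end
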